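/- arXiv:1709.02144 — 9 statements merged into one kernel-verified Lean document; each statement's English description precedes it below -/
import Mathlib

section
/- Let k, l, m, n be integers. Set A = 2k² + 2l², B = 8 + 4km + 4ln, C = 2m² + 2n², and let h = gcd(A, B, C). Then every odd prime p dividing h satisfies p ≡ 1 (mod 4). -/
/-!
Reduce modulo an odd prime `p ∣ h`. Since `2` is invertible mod `p`, `p ∣ A` gives `k² + l² ≡ 0`,
and `p ∣ B` rules out `k ≡ l ≡ 0` (it would force `p ∣ 8`). A nontrivial zero of `x² + y²` in
`ZMod p` makes `-1` a square there, which happens exactly when `p % 4 ≠ 3`.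
-/

theorem isSquare_neg_one_of_sq_add_sq_eq_zero {F : Type*} [Field F] {x y : F}
    (h : x ^ 2 + y ^ 2 = 0) (hne : x ≠ 0 ∨ y ≠ 0) : IsSquare (-1 : F) := by
  wlog hx : x ≠ 0 generalizing x y
  · exact this (by linear_combination h) hne.symm (hne.resolve_left hx)
  exact ⟨y / x, by field_simp; linear_combination -h⟩

theorem ZMod.two_ne_zero_of_odd {p : ℕ} [Fact p.Prime] (hodd : Odd p) : (2 : ZMod p) ≠ 0 := by
  intro h2
  have hp2 : p ∣ 2 := (ZMod.natCast_eq_zero_iff 2 p).mp (by exact_mod_cast h2)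
  have : p = 2 := (Nat.prime_dvd_prime_iff_eq Fact.out Nat.prime_two).mp hp2
  exact Nat.not_even_iff_odd.mpr hodd (this ▸ even_two)

theorem stmt_0_general (k l m n : ℤ)
    (A B C : ℤ) (hA : A = 2*k^2 + 2*l^2) (hB : B = 8 + 4*k*m + 4*l*n)
    (h : ℕ) (hh : (h : ℤ) = Int.gcd A (Int.gcd B C)) :
    ∀ p : ℕ, p.Prime → Odd p → p ∣ h → p % 4 = 1 := by
  intro p hp hodd hph
  have := Fact.mk hp
  have hpA : (p : ℤ) ∣ A :=
    (Int.natCast_dvd_natCast.mpr hph).trans (hh ▸ Int.gcd_dvd_left _ _)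
  have hpB : (p : ℤ) ∣ B :=
    (Int.natCast_dvd_natCast.mpr hph).trans
      (hh ▸ (Int.gcd_dvd_right _ _).trans (Int.gcd_dvd_left _ _))
  have h2 := ZMod.two_ne_zero_of_odd hodd
  have hA' : (2 : ZMod p) * ((k : ZMod p) ^ 2 + (l : ZMod p) ^ 2) = 0 := by
    have := (ZMod.intCast_zmod_eq_zero_iff_dvd A p).mpr hpA
    rw [hA] at this; push_cast at this; linear_combination this
  have hB' : (2 : ZMod p) ^ 3 + 4 * ((k : ZMod p) * m + (l : ZMod p) * n) = 0 := by
    have := (ZMod.intCast_zmod_eq_zero_iff_dvd B p).mpr hpB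
    rw [hB] at this; push_cast at this; linear_combination this
  have hkl := (mul_eq_zero.mp hA').resolve_left h2
  have hne : (k : ZMod p) ≠ 0 ∨ (l : ZMod p) ≠ 0 := by
    by_contra! hkl0
    rw [hkl0.1, hkl0.2] at hB'
    exact h2 (pow_eq_zero_iff three_ne_zero |>.mp (by simpa using hB'))
  have h3 := ZMod.exists_sq_eq_neg_one_iff.mp (isSquare_neg_one_of_sq_add_sq_eq_zero hkl hne)
  have h1 := Nat.odd_iff.mp hodd
  omega

/-- Lemma 3.6 (first part): every odd prime dividing h = gcd(A,B,C) is ≡ 1 (mod 4),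
where A = 2k²+2l², B = 8+4km+4ln, C = 2m²+2n². -/
theorem stmt_0 (k l m n : ℤ)
    (A B C : ℤ) (hA : A = 2*k^2 + 2*l^2) (hB : B = 8 + 4*k*m + 4*l*n)
    (hC : C = 2*m^2 + 2*n^2)
    (h : ℕ) (hh : (h : ℤ) = Int.gcd A (Int.gcd B C)) :
    ∀ p : ℕ, p.Prime → Odd p → p ∣ h → p % 4 = 1 :=
  stmt_0_general k l m n A B C hA hB h hh
end

section
/- Let k, l, m, n be integers. Set A = 2k² + 2l², B = 8 + 4km + 4ln, C = 2m² + 2n², and let h = gcd(A, B, C). Then the integers a = A/h and c = C/h satisfy a ≢ 3 (mod 4) and c ≢ 3 (mod 4). -/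
/-!
A prime `p ≡ 3 (mod 4)` dividing `x² + y²` divides `x` and `y`. Since `A = (k+l)² + (k-l)²`,
such a prime dividing `h` would divide `k ± l`, hence `4km + 4ln`, hence `8`; so `h` has no
prime factor `≡ 3 (mod 4)`. Dividing a sum of two squares by such an `h` keeps the exponents of
the primes `≡ 3 (mod 4)` even, so `A / h` and `C / h` are again sums of two squares, and a sum of
two squares is never `≡ 3 (mod 4)`.
-/

theorem Int.dvd_of_dvd_sq_add_sq {p : ℕ} [Fact p.Prime] (hp3 : p % 4 = 3) {x y : ℤ}
    (h : (p : ℤ) ∣ x ^ 2 + y ^ 2) : (p : ℤ) ∣ x := by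
  rw [← ZMod.intCast_zmod_eq_zero_iff_dvd] at h ⊢
  push_cast at h
  by_contra hx
  exact ZMod.mod_four_ne_three_of_sq_eq_neg_sq hx (eq_neg_of_add_eq_zero_left h) hp3

theorem Nat.mod_four_ne_three_of_eq_sq_add_sq {n x y : ℕ} (h : n = x ^ 2 + y ^ 2) :
    n % 4 ≠ 3 := by
  have sq_add_sq_ne : ∀ a b : ZMod 4, a ^ 2 + b ^ 2 ≠ 3 := by decide
  intro h3
  have h3' : ((x ^ 2 + y ^ 2 : ℕ) : ZMod 4) = (3 : ℕ) :=
    (ZMod.natCast_eq_natCast_iff' _ 3 4).mpr (h ▸ h3)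
  push_cast at h3'
  exact sq_add_sq_ne _ _ h3'

theorem Nat.exists_sq_add_sq_div {n d : ℕ} (hn : ∃ x y, n = x ^ 2 + y ^ 2) (hd : d ∣ n)
    (hd3 : ∀ p, p.Prime → p % 4 = 3 → ¬ p ∣ d) : ∃ x y, n / d = x ^ 2 + y ^ 2 := by
  rw [Nat.eq_sq_add_sq_iff] at hn ⊢
  intro q hq hq3
  have hq_prime : Fact q.Prime := ⟨Nat.prime_of_mem_primeFactors hq⟩
  have hn0 : n ≠ 0 := fun h0 => (Nat.mem_primeFactors.1 hq).2.2 (by rw [h0, Nat.zero_div])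
  rw [padicValNat.div_of_dvd hd, padicValNat.eq_zero_of_not_dvd (hd3 q hq_prime.out hq3),
    Nat.sub_zero]
  exact hn q (Nat.primeFactors_mono (Nat.div_dvd_of_dvd hd) hn0 hq) hq3

theorem Int.sq_add_sq_div_emod_four_ne_three (x y : ℤ) {d : ℕ} (hd : (d : ℤ) ∣ x ^ 2 + y ^ 2)
    (hd3 : ∀ p, p.Prime → p % 4 = 3 → ¬ p ∣ d) : (x ^ 2 + y ^ 2) / d % 4 ≠ 3 := by
  have hN : x ^ 2 + y ^ 2 = ((x.natAbs ^ 2 + y.natAbs ^ 2 : ℕ) : ℤ) := by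
    simp only [Nat.cast_add, Nat.cast_pow, Int.natCast_natAbs, sq_abs]
  rw [hN] at hd ⊢
  rw [← Int.natCast_ediv]
  obtain ⟨u, v, huv⟩ := Nat.exists_sq_add_sq_div ⟨_, _, rfl⟩ (Int.natCast_dvd_natCast.mp hd) hd3
  have := Nat.mod_four_ne_three_of_eq_sq_add_sq huv
  omega

theorem Nat.Prime.mod_four_ne_three_of_dvd {p : ℕ} (hp : p.Prime) {k l m n : ℤ}
    (hA : (p : ℤ) ∣ 2 * k ^ 2 + 2 * l ^ 2) (hB : (p : ℤ) ∣ 8 + 4 * k * m + 4 * l * n) :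
    p % 4 ≠ 3 := by
  have : Fact p.Prime := ⟨hp⟩
  intro hp3
  rw [show 2 * k ^ 2 + 2 * l ^ 2 = (k + l) ^ 2 + (k - l) ^ 2 by ring] at hA
  obtain ⟨u, hu⟩ := Int.dvd_of_dvd_sq_add_sq hp3 hA
  obtain ⟨v, hv⟩ := Int.dvd_of_dvd_sq_add_sq hp3 ((add_comm _ _).subst hA)
  have h8 : (p : ℤ) ∣ 8 := by
    rw [show 8 + 4 * k * m + 4 * l * n = 8 + p * (2 * (u * (m + n) + v * (m - n))) by
      linear_combination (2 * (m + n)) * hu + (2 * (m - n)) * hv] at hB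
    exact (dvd_add_left (dvd_mul_right _ _)).mp hB
  have h2 : p ∣ 2 ^ 3 := by exact_mod_cast h8
  have := (Nat.prime_dvd_prime_iff_eq hp Nat.prime_two).mp (hp.dvd_of_dvd_pow h2)
  omega

/-- Lemma 3.7 (first part): a = A/h and c = C/h satisfy a ≢ 3 (mod 4) and c ≢ 3 (mod 4),
where A = 2k²+2l², B = 8+4km+4ln, C = 2m²+2n², h = gcd(A,B,C). -/
theorem stmt_2 (k l m n : ℤ)
    (A B C : ℤ) (hA : A = 2*k^2 + 2*l^2) (hB : B = 8 + 4*k*m + 4*l*n)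
    (hC : C = 2*m^2 + 2*n^2)
    (h : ℕ) (hh : (h : ℤ) = Int.gcd A (Int.gcd B C))
    (a c : ℤ) (ha : a = A / (h : ℤ)) (hc : c = C / (h : ℤ)) :
    a % 4 ≠ 3 ∧ c % 4 ≠ 3 := by
  have hdA : (h : ℤ) ∣ A := hh ▸ Int.gcd_dvd_left _ _
  have hdB : (h : ℤ) ∣ B := hh ▸ (Int.gcd_dvd_right _ _).trans (Int.gcd_dvd_left _ _)
  have hdC : (h : ℤ) ∣ C := hh ▸ (Int.gcd_dvd_right _ _).trans (Int.gcd_dvd_right _ _)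
  have hh3 : ∀ p, p.Prime → p % 4 = 3 → ¬ p ∣ h := by
    intro p hp hp3 hph
    replace hph : (p : ℤ) ∣ h := Int.natCast_dvd_natCast.mpr hph
    exact hp.mod_four_ne_three_of_dvd (hA ▸ hph.trans hdA) (hB ▸ hph.trans hdB) hp3
  rw [hA, show 2 * k ^ 2 + 2 * l ^ 2 = (k + l) ^ 2 + (k - l) ^ 2 by ring] at ha hdA
  rw [hC, show 2 * m ^ 2 + 2 * n ^ 2 = (m + n) ^ 2 + (m - n) ^ 2 by ring] at hc hdC
  exact ⟨ha ▸ Int.sq_add_sq_div_emod_four_ne_three _ _ hdA hh3,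
    hc ▸ Int.sq_add_sq_div_emod_four_ne_three _ _ hdC hh3⟩
end

section
/- Let k, l, m, n be integers. Set A = 2k² + 2l², B = 8 + 4km + 4ln, C = 2m² + 2n², and let h = gcd(A, B, C). Then the integer b = B/h is odd if and only if 8 divides h. In particular, if k, l, m, n are not all even, then b is even. -/
/-!
Since `h * b = B` and `4 ∣ B`, an odd `b` forces `4 ∣ h`, hence `4 ∣ A` and `4 ∣ C`, i.e.
`k ≡ l` and `m ≡ n` mod 2. Then `km + ln` is even, so `8 ∣ B`, and `b` odd gives `8 ∣ h`.
Conversely `8 ∣ A` and `8 ∣ C` make `k, l, m, n` all even, so `B ≡ 8 mod 16`, and with `8 ∣ h`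
this rules out an even `b`.
-/

theorem Int.two_pow_dvd_of_dvd_mul_of_odd {a b : ℤ} {j : ℕ} (hb : Odd b) (h : 2 ^ j ∣ a * b) :
    2 ^ j ∣ a :=
  (Int.isCoprime_two_left.mpr hb).pow_left.dvd_of_dvd_mul_right h

theorem Int.even_of_eight_dvd_two_mul_sq_add_sq {x y : ℤ} (h : 8 ∣ 2 * x ^ 2 + 2 * y ^ 2) :
    Even x := by
  by_contra hx
  have hx2 := Int.sq_mod_four_eq_one_of_odd (Int.not_even_iff_odd.mp hx)
  rcases Int.even_or_odd y with ⟨c, rfl⟩ | hy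
  · have : (c + c) ^ 2 = 4 * c ^ 2 := by ring
    omega
  · have := Int.sq_mod_four_eq_one_of_odd hy
    omega

theorem Int.even_mul_add_mul_of_even_sq_add_sq {k l m n : ℤ} (hkl : Even (k ^ 2 + l ^ 2))
    (hmn : Even (m ^ 2 + n ^ 2)) : Even (k * m + l * n) := by
  simp only [Int.even_add, Int.even_mul, Int.even_pow] at *
  tauto

section DiscriminantForm

variable {k l m n d b : ℤ}

theorem even_all_of_eight_dvd (hA : d ∣ 2 * k ^ 2 + 2 * l ^ 2) (hC : d ∣ 2 * m ^ 2 + 2 * n ^ 2)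
    (h8 : 8 ∣ d) : Even k ∧ Even l ∧ Even m ∧ Even n := by
  have h8A := h8.trans hA
  have h8C := h8.trans hC
  refine ⟨Int.even_of_eight_dvd_two_mul_sq_add_sq h8A, ?_,
    Int.even_of_eight_dvd_two_mul_sq_add_sq h8C, ?_⟩
  · exact Int.even_of_eight_dvd_two_mul_sq_add_sq (y := k) (by rwa [add_comm])
  · exact Int.even_of_eight_dvd_two_mul_sq_add_sq (y := m) (by rwa [add_comm])

theorem eight_dvd_of_odd (hA : d ∣ 2 * k ^ 2 + 2 * l ^ 2) (hC : d ∣ 2 * m ^ 2 + 2 * n ^ 2)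
    (hB : d * b = 8 + 4 * k * m + 4 * l * n) (hb : Odd b) : 8 ∣ d := by
  have h4 : 2 ^ 2 ∣ d :=
    Int.two_pow_dvd_of_dvd_mul_of_odd hb (hB ▸ ⟨2 + k * m + l * n, by ring⟩)
  have h4A : (4 : ℤ) ∣ 2 * k ^ 2 + 2 * l ^ 2 := h4.trans hA
  have h4C : (4 : ℤ) ∣ 2 * m ^ 2 + 2 * n ^ 2 := h4.trans hC
  have hkl : Even (k ^ 2 + l ^ 2) := Int.even_iff.mpr (by omega)
  have hmn : Even (m ^ 2 + n ^ 2) := Int.even_iff.mpr (by omega)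
  obtain ⟨s, hs⟩ := Int.even_mul_add_mul_of_even_sq_add_sq hkl hmn
  exact Int.two_pow_dvd_of_dvd_mul_of_odd (j := 3) hb
    (hB ▸ ⟨1 + s, by linear_combination 4 * hs⟩)

theorem odd_of_eight_dvd (hA : d ∣ 2 * k ^ 2 + 2 * l ^ 2) (hC : d ∣ 2 * m ^ 2 + 2 * n ^ 2)
    (hB : d * b = 8 + 4 * k * m + 4 * l * n) (h8 : 8 ∣ d) : Odd b := by
  obtain ⟨⟨a, rfl⟩, ⟨c, rfl⟩, ⟨e, rfl⟩, ⟨f, rfl⟩⟩ := even_all_of_eight_dvd hA hC h8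
  rw [← Int.not_even_iff_odd]
  rintro ⟨t, rfl⟩
  obtain ⟨u, rfl⟩ := h8
  have : 16 * (u * t) = 8 + 16 * (a * e + c * f) := by linear_combination hB
  omega

end DiscriminantForm

/-- Lemma 3.7 (second part): b = B/h is odd iff 8 ∣ h; in particular, if k, l, m, n
are not all even then b is even. Here A = 2k²+2l², B = 8+4km+4ln, C = 2m²+2n²,
h = gcd(A,B,C). -/
theorem stmt_3 (k l m n : ℤ)
    (A B C : ℤ) (hA : A = 2*k^2 + 2*l^2) (hB : B = 8 + 4*k*m + 4*l*n)
    (hC : C = 2*m^2 + 2*n^2)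
    (h : ℕ) (hh : (h : ℤ) = Int.gcd A (Int.gcd B C))
    (b : ℤ) (hb : b = B / (h : ℤ)) :
    (Odd b ↔ 8 ∣ h) ∧ (¬ (Even k ∧ Even l ∧ Even m ∧ Even n) → Even b) := by
  have hdA : (h : ℤ) ∣ A := by rw [hh]; exact Int.gcd_dvd_left _ _
  have hdB : (h : ℤ) ∣ B := by
    rw [hh]; exact (Int.gcd_dvd_right _ _).trans (Int.gcd_dvd_left _ _)
  have hdC : (h : ℤ) ∣ C := by
    rw [hh]; exact (Int.gcd_dvd_right _ _).trans (Int.gcd_dvd_right _ _)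
  have hBh : (h : ℤ) * b = B := by rw [hb]; exact Int.mul_ediv_cancel' hdB
  subst hA hB hC
  have odd_iff : Odd b ↔ (8 : ℤ) ∣ h :=
    ⟨eight_dvd_of_odd hdA hdC hBh, odd_of_eight_dvd hdA hdC hBh⟩
  refine ⟨odd_iff.trans (by exact_mod_cast Int.natCast_dvd_natCast), fun hne => ?_⟩
  by_contra hodd
  exact hne (even_all_of_eight_dvd hdA hdC (odd_iff.mp (Int.not_even_iff_odd.mp hodd)))
end

section
/- Let k, l, m, n be integers, not all even. Define Q(x,y) = 2(kx+my)² + 2(lx+ny)² + 8xy and assume Q(x,y) > 0 for all integers (x,y) ≠ (0,0). Then there exist integers x and y, not both zero, such that the positive integer d = Q(x,y) satisfies: 8 ∤ d and every odd prime dividing d is ≡ 1 (mod 4). -/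
/-!
Write `k = G a`, `l = G b` with `gcd a b = 1`, `D = an - bm`, `N = a² + b²`. For
`X = 2tD + 4t²N` one has `Q(X, 1) = 2(r² + s²)` with `r + is = (k + il)X + (m + in) + 4ti(a + ib)`,
and `r, s` have the parities of `m, n`; so if `m, n` are not both even (otherwise swap the variables),
`8 ∤ Q(X, 1)`. A prime `p ≡ 3 (mod 4)` dividing `r² + s²` divides `r` and `s`, hence divides
`as - br = D + 4tN` and `(kn - lm)² - 4(km + ln)`, a quantity that positivity makes nonzero and that
is unchanged by `(m, n) ↦ (r, s)`. Since such a `p` never divides `4N`, a suitable choice of `t`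
makes `D + 4tN` prime to all of them.
-/

def formQ (k l m n x y : ℤ) : ℤ := 2*(k*x + m*y)^2 + 2*(l*x + n*y)^2 + 8*x*y

/-- `Q / 2` has discriminant `4 - discQ`. -/
def discQ (k l m n : ℤ) : ℤ := (k*n - l*m)^2 - 4*(k*m + l*n)

/-- Condition (**) of the paper. -/
def CondStarStar (d : ℤ) : Prop :=
  ¬ 8 ∣ d ∧ ∀ p : ℕ, p.Prime → Odd p → (p : ℤ) ∣ d → p % 4 = 1

theorem Int.dvd_of_dvd_sq_add_sq_of_mod_four_eq_three {p : ℕ} (hp : p.Prime) (hp3 : p % 4 = 3)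
    {a b : ℤ} (h : (p : ℤ) ∣ a^2 + b^2) : (p : ℤ) ∣ a := by
  have := Fact.mk hp
  by_contra ha
  refine ZMod.mod_four_ne_three_of_sq_eq_neg_sq (x := (a : ZMod p)) (y := b) ?_ ?_ hp3
  · rwa [Ne, ZMod.intCast_zmod_eq_zero_iff_dvd]
  · have h0 := (ZMod.intCast_zmod_eq_zero_iff_dvd _ p).mpr h
    push_cast at h0
    linear_combination h0

theorem Int.not_four_dvd_sq_add_sq {r s : ℤ} (h : ¬ (Even r ∧ Even s)) : ¬ 4 ∣ r^2 + s^2 := by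
  have sq_emod_of_even : ∀ x : ℤ, Even x → x^2 % 4 = 0 := by
    rintro x ⟨a, rfl⟩
    ring_nf
    omega
  rcases Int.even_or_odd r with hr | hr <;> rcases Int.even_or_odd s with hs | hs
  · exact absurd ⟨hr, hs⟩ h
  · have := sq_emod_of_even r hr
    have := Int.sq_mod_four_eq_one_of_odd hs
    omega
  · have := Int.sq_mod_four_eq_one_of_odd hr
    have := sq_emod_of_even s hs
    omega
  · have := Int.sq_mod_four_eq_one_of_odd hr
    have := Int.sq_mod_four_eq_one_of_odd hs
    omega

theorem condStarStar_two_mul_sq_add_sq {r s : ℤ} (hpar : ¬ (Even r ∧ Even s))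
    (hprim : ∀ p : ℕ, p.Prime → p % 4 = 3 → (p : ℤ) ∣ r → ¬ (p : ℤ) ∣ s) :
    CondStarStar (2 * (r^2 + s^2)) := by
  refine ⟨fun h8 => Int.not_four_dvd_sq_add_sq hpar (by omega), fun p hp hodd hdvd => ?_⟩
  have hp2 : p % 2 = 1 := Nat.odd_iff.mp hodd
  have hpsq : (p : ℤ) ∣ r^2 + s^2 := by
    refine ((Nat.prime_iff_prime_int.mp hp).dvd_or_dvd hdvd).resolve_left fun h2 => ?_
    have := Int.le_of_dvd two_pos h2
    have := hp.two_le
    omega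
  by_contra hp1
  have hp3 : p % 4 = 3 := by omega
  exact hprim p hp hp3 (Int.dvd_of_dvd_sq_add_sq_of_mod_four_eq_three hp hp3 hpsq)
    (Int.dvd_of_dvd_sq_add_sq_of_mod_four_eq_three hp hp3 (add_comm (r^2) _ ▸ hpsq))

theorem Int.exists_add_mul_not_dvd (a c : ℤ) {S : ℤ} (hS : S ≠ 0) :
    ∃ t : ℤ, ∀ p : ℕ, p.Prime → (p : ℤ) ∣ S → ¬ (p : ℤ) ∣ c → ¬ (p : ℤ) ∣ a + c * t := by
  classical
  set P : ℤ := ∏ p ∈ S.natAbs.primeFactors.filter (fun p : ℕ => ¬ (p : ℤ) ∣ c), (p : ℤ)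
  obtain ⟨u, v, huv⟩ : IsCoprime c P := IsCoprime.prod_right fun p hp => by
    simp only [Finset.mem_filter, Nat.mem_primeFactors] at hp
    exact ((Nat.prime_iff_prime_int.mp hp.1.1).irreducible.coprime_iff_not_dvd.mpr hp.2).symm
  refine ⟨u * (1 - a), fun p hp hpS hpc hdvd => (Nat.prime_iff_prime_int.mp hp).not_dvd_one ?_⟩
  have hpP : (p : ℤ) ∣ P := Finset.dvd_prod_of_mem _ <| by
    simp only [Finset.mem_filter, Nat.mem_primeFactors]
    exact ⟨⟨hp, Int.natCast_dvd.mp hpS, Int.natAbs_ne_zero.mpr hS⟩, hpc⟩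
  have hone : a + c * (u * (1 - a)) + (1 - a) * v * P = 1 := by linear_combination (1 - a) * huv
  rw [← hone]
  exact dvd_add hdvd (hpP.mul_left _)

theorem four_lt_discQ {k l m n : ℤ}
    (hpos : ∀ x y : ℤ, (x, y) ≠ (0, 0) → 0 < formQ k l m n x y) : 4 < discQ k l m n := by
  have ha : 0 < k^2 + l^2 := by
    have h := hpos 1 0 (by simp)
    have h10 : formQ k l m n 1 0 = 2 * (k^2 + l^2) := by unfold formQ; ring
    linarith
  have h := hpos (k*m + l*n + 2) (-(k^2 + l^2)) (by simp only [ne_eq, Prod.mk.injEq, not_and]; exact fun _ => neg_ne_zero.mpr ha.ne')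
  have hval : formQ k l m n (k*m + l*n + 2) (-(k^2 + l^2)) = 2 * (k^2 + l^2) * (discQ k l m n - 4) := by
    unfold formQ discQ
    ring
  nlinarith

theorem dvd_discQ {d m n : ℤ} (k l : ℤ) (hm : d ∣ m) (hn : d ∣ n) : d ∣ discQ k l m n :=
  dvd_sub ((dvd_sub (hn.mul_left k) (hm.mul_left l)).pow two_ne_zero)
    (((hm.mul_left k).add (hn.mul_left l)).mul_left 4)

theorem Int.not_dvd_four_mul_sq_add_sq {p : ℕ} (hp : p.Prime) (hp3 : p % 4 = 3) {a b : ℤ}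
    (hab : Int.gcd a b = 1) : ¬ (p : ℤ) ∣ 4 * (a^2 + b^2) := by
  intro h
  have hpN : (p : ℤ) ∣ a^2 + b^2 := by
    refine ((Nat.prime_iff_prime_int.mp hp).dvd_or_dvd h).resolve_left fun h4 => ?_
    have := Int.le_of_dvd four_pos h4
    obtain rfl : p = 3 := by omega
    norm_num at h4
  have hpab := Int.dvd_coe_gcd (Int.dvd_of_dvd_sq_add_sq_of_mod_four_eq_three hp hp3 hpN)
    (Int.dvd_of_dvd_sq_add_sq_of_mod_four_eq_three hp hp3 (add_comm (a^2) _ ▸ hpN))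
  rw [hab] at hpab
  exact (Nat.prime_iff_prime_int.mp hp).not_dvd_one hpab

theorem exists_condStarStar_formQ (k l m n : ℤ) (hmn : ¬ (Even m ∧ Even n))
    (hpos : ∀ x y : ℤ, (x, y) ≠ (0, 0) → 0 < formQ k l m n x y) :
    ∃ x, CondStarStar (formQ k l m n x 1) := by
  have hS : discQ k l m n ≠ 0 := by have := four_lt_discQ hpos; omega
  have hkl : 0 < Int.gcd k l := Int.gcd_pos_iff.mpr <| by
    by_contra! h
    obtain ⟨rfl, rfl⟩ := h
    simp [discQ] at hS
  obtain ⟨G, a, b, -, hab, rfl, rfl⟩ := Int.exists_gcd_one' hkl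
  obtain ⟨t, ht⟩ := Int.exists_add_mul_not_dvd (a*n - b*m) (4 * (a^2 + b^2)) hS
  set X := 2*t*(a*n - b*m) + 4*t^2*(a^2 + b^2)
  set r := a*G*X + m - 4*t*b
  set s := b*G*X + n + 4*t*a
  have hQ : formQ (a*G) (b*G) m n X 1 = 2 * (r^2 + s^2) := by simp only [formQ, X, r, s]; ring
  have hdisc : discQ (a*G) (b*G) r s = discQ (a*G) (b*G) m n := by
    simp only [discQ, X, r, s]; ring
  have hW : a*s - b*r = (a*n - b*m) + 4*(a^2 + b^2)*t := by simp only [X, r, s]; ring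
  refine ⟨X, hQ ▸ condStarStar_two_mul_sq_add_sq ?_ fun p hp hp3 hpr hps => ?_⟩
  · have hr : r = m + 2 * (a*G*(t*(a*n - b*m) + 2*t^2*(a^2 + b^2)) - 2*t*b) := by ring
    have hs : s = n + 2 * (b*G*(t*(a*n - b*m) + 2*t^2*(a^2 + b^2)) + 2*t*a) := by ring
    rw [hr, hs]
    simpa [Int.even_add, even_two_mul] using hmn
  exact ht p hp (hdisc ▸ dvd_discQ _ _ hpr hps) (Int.not_dvd_four_mul_sq_add_sq hp hp3 hab)
    (hW ▸ dvd_sub (hps.mul_left a) (hpr.mul_left b))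

theorem formQ_swap (k l m n x y : ℤ) : formQ k l m n x y = formQ m n k l y x := by
  unfold formQ
  ring

/-- The number-theoretic core of the rank-four case of Theorem 3.5: if k, l, m, n are
not all even and Q(x,y) = 2(kx+my)²+2(lx+ny)²+8xy is positive away from the origin,
then Q represents a positive integer d satisfying condition (**): 8 ∤ d and every odd
prime dividing d is ≡ 1 (mod 4). -/
theorem stmt_5 (k l m n : ℤ)
    (hne : ¬ (Even k ∧ Even l ∧ Even m ∧ Even n))
    (Q : ℤ → ℤ → ℤ)
    (hQ : ∀ x y, Q x y = 2*(k*x + m*y)^2 + 2*(l*x + n*y)^2 + 8*x*y)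
    (hpos : ∀ x y : ℤ, (x, y) ≠ (0, 0) → 0 < Q x y) :
    ∃ x y : ℤ, (x, y) ≠ (0, 0) ∧ 0 < Q x y ∧ ¬ (8 ∣ Q x y) ∧
      ∀ p : ℕ, p.Prime → Odd p → (p : ℤ) ∣ Q x y → p % 4 = 1 := by
  obtain rfl : Q = formQ k l m n := funext₂ hQ
  by_cases hmn : Even m ∧ Even n
  · have hkl : ¬ (Even k ∧ Even l) := fun hkl => hne ⟨hkl.1, hkl.2, hmn⟩
    obtain ⟨y, hy⟩ := exists_condStarStar_formQ m n k l hkl fun x y hxy => by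
      rw [formQ_swap]
      exact hpos y x (by simpa [and_comm] using hxy)
    rw [formQ_swap] at hy
    exact ⟨1, y, by simp, hpos 1 y (by simp), hy⟩
  · obtain ⟨x, hx⟩ := exists_condStarStar_formQ k l m n hmn hpos
    exact ⟨x, 1, by simp, hpos x 1 (by simp), hx⟩
end

section
/- Let a, n be integers and d a positive even integer with a > 0 and a²·d = 2n² + 2. Then a ≡ 1 (mod 4). -/
/-! Since `d` is even and `4 ∤ n² + 1`, `a` is odd, so `a ∣ n² + 1` and `-1` is a square
modulo `a`; hence the Jacobi symbol `J(-1 | a) = χ₄ a` equals `1`, i.e. `a ≡ 1 (mod 4)`. -/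

theorem Nat.mod_four_eq_one_of_dvd_sq_add_one {b : ℕ} (hb : Odd b) {n : ℤ}
    (h : (b : ℤ) ∣ n ^ 2 + 1) : b % 4 = 1 := by
  have hcop : n.gcd b = 1 := by
    rw [← Int.isCoprime_iff_gcd_eq_one]
    obtain ⟨k, hk⟩ := h
    exact ⟨-n, k, by linear_combination -hk⟩
  have hneg_one : -1 ≡ n ^ 2 [ZMOD b] := Int.modEq_iff_dvd.mpr (by simpa using h)
  have hχ : ZMod.χ₄ b = 1 := by
    rw [← jacobiSym.at_neg_one hb, jacobiSym.mod_left' hneg_one, jacobiSym.sq_one' hcop]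
  rw [ZMod.χ₄_nat_eq_if_mod_four, if_neg (by simpa [Nat.odd_iff] using hb)] at hχ
  split_ifs at hχ with h4
  exact h4

theorem Int.odd_of_sq_mul_eq_two_mul_sq_add_two {a n d : ℤ} (hd : Even d)
    (h : a ^ 2 * d = 2 * n ^ 2 + 2) : Odd a := by
  rw [← Int.not_even_iff_odd]
  rintro ⟨b, rfl⟩
  obtain ⟨e, rfl⟩ := hd
  rcases Int.even_or_odd n with ⟨k, rfl⟩ | ⟨k, rfl⟩ <;> ring_nf at h <;> omega

theorem stmt_8_general (a n d : ℤ) (hde : Even d) (ha : 0 < a)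
    (heq : a^2 * d = 2*n^2 + 2) :
    a % 4 = 1 := by
  have hodd : Odd a := Int.odd_of_sq_mul_eq_two_mul_sq_add_two hde heq
  have hdvd : a ∣ n ^ 2 + 1 :=
    (Int.isCoprime_two_right.mpr hodd).dvd_of_dvd_mul_right ⟨a * d, by linear_combination -heq⟩
  lift a to ℕ using ha.le
  exact_mod_cast Nat.mod_four_eq_one_of_dvd_sq_add_one (Int.odd_coe_nat a |>.mp hodd) hdvd

/-- If d is a positive even integer, a > 0 and a²·d = 2n² + 2, then a ≡ 1 (mod 4). -/
theorem stmt_8 (a n d : ℤ) (hd : 0 < d) (hde : Even d) (ha : 0 < a)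
    (heq : a^2 * d = 2*n^2 + 2) :
    a % 4 = 1 :=
  stmt_8_general a n d hde ha heq
end

section
/- Let n be a natural number. Then there exist integers x, y with 2x² + (1 + 2n)xy + (1 + n²)y² = 1 if and only if n = 0 or n = 1. -/
/-! Completing the square, `8 (2x² + (1+2m)xy + (1+m²)y²) = (4x + (1+2m)y)² + ((2m-1)² + 6) y²`.
If the form takes the value `1`, then `y ≠ 0` (as `2x² = 1` has no solution), so `(2m-1)² + 6 ≤ 8`,
forcing `m ∈ {0, 1}`; conversely `(x, y) = (0, 1)` and `(1, -1)` are solutions for `m = 0, 1`. -/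

theorem eight_mul_form_eq_sq_add (m x y : ℤ) :
    8 * (2*x^2 + (1 + 2*m)*x*y + (1 + m^2)*y^2) =
      (4*x + (1 + 2*m)*y)^2 + ((2*m - 1)^2 + 6)*y^2 := by
  ring

theorem sq_two_mul_sub_one_le_two_of_form_eq_one {m x y : ℤ}
    (h : 2*x^2 + (1 + 2*m)*x*y + (1 + m^2)*y^2 = 1) : (2*m - 1)^2 ≤ 2 := by
  have hy : y ≠ 0 := by
    rintro rfl
    omega
  have hy2 : 1 ≤ y^2 := by
    have := sq_pos_of_ne_zero hy
    omega
  have h8 := eight_mul_form_eq_sq_add m x y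
  rw [h] at h8
  nlinarith [sq_nonneg (4*x + (1 + 2*m)*y), sq_nonneg (2*m - 1)]

theorem exists_form_eq_one_iff (m : ℤ) :
    (∃ x y : ℤ, 2*x^2 + (1 + 2*m)*x*y + (1 + m^2)*y^2 = 1) ↔ (m = 0 ∨ m = 1) := by
  constructor
  · rintro ⟨x, y, h⟩
    have hm := sq_two_mul_sub_one_le_two_of_form_eq_one h
    have hlo : -1 ≤ 2*m - 1 := by nlinarith
    have hhi : 2*m - 1 ≤ 1 := by nlinarith
    omega
  · rintro (rfl | rfl)
    · exact ⟨0, 1, by norm_num⟩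
    · exact ⟨1, -1, by norm_num⟩

/-- Lemma 3.10: the form 2x² + (1+2n)xy + (1+n²)y² represents 1 over ℤ
iff n = 0 or n = 1. -/
theorem stmt_11 (n : ℕ) :
    (∃ x y : ℤ, 2*x^2 + (1 + 2*(n : ℤ))*x*y + (1 + (n : ℤ)^2)*y^2 = 1) ↔
      (n = 0 ∨ n = 1) := by
  rw [exists_form_eq_one_iff]
  omega
end

section
/- Let a, b, c be integers with c even, let M be the symmetric matrix [[-2, 0, a], [0, -2, b], [a, b, c]], and set d = 2a² + 2b² + 4c (the determinant of M). Assume d ≡ 2 (mod 8). Then there exist integers s, t such that, with P = [[1, 0, s], [0, 1, t], [0, 0, 1]], the matrix PᵀMP equals either [[-2, 0, 1], [0, -2, 0], [1, 0, (d-2)/4]] or [[-2, 0, 0], [0, -2, 1], [0, 1, (d-2)/4]]. -/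
/-!
Replacing `τ` by `τ + s λ₁ + t λ₂` changes `(a, b)` to `(a - 2s, b - 2t)`, so with `s = a / 2`,
`t = b / 2` both off-diagonal entries become residues mod 2. The determinant
`d = 2a² + 2b² + 4c` is unchanged, and since `c` is even, `d ≡ 2a² + 2b² ≡ 2 (a % 2 + b % 2)`
mod 8; hence `d ≡ 2 (mod 8)` means exactly one residue is `1`, and then `d = 2 + 4c'` fixes the
new bottom-right entry `c' = (d - 2) / 4`.
-/

open Matrix

theorem shear_transpose_mul_gram_mul_shear {R : Type*} [CommRing R] (a b c s t : R) :
    (!![1, 0, s; 0, 1, t; 0, 0, 1] : Matrix (Fin 3) (Fin 3) R)ᵀ *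
        !![-2, 0, a; 0, -2, b; a, b, c] * !![1, 0, s; 0, 1, t; 0, 0, 1] =
      !![-2, 0, a - 2 * s; 0, -2, b - 2 * t;
        a - 2 * s, b - 2 * t, c + 2 * a * s + 2 * b * t - 2 * s ^ 2 - 2 * t ^ 2] := by
  ext i j
  fin_cases i <;> fin_cases j <;> simp [Matrix.mul_apply, Fin.sum_univ_succ] <;> ring

theorem Int.two_mul_sq_emod_eight (a : ℤ) : 2 * a ^ 2 % 8 = 2 * (a % 2) := by
  rcases Int.even_or_odd' a with ⟨m, rfl | rfl⟩ <;> ring_nf <;> omega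

theorem Int.emod_two_eq_one_xor_of_emod_eight {a b c : ℤ} (hc : Even c)
    (h : (2 * a ^ 2 + 2 * b ^ 2 + 4 * c) % 8 = 2) :
    a % 2 = 1 ∧ b % 2 = 0 ∨ a % 2 = 0 ∧ b % 2 = 1 := by
  obtain ⟨k, rfl⟩ := hc
  have := a.two_mul_sq_emod_eight
  have := b.two_mul_sq_emod_eight
  omega

/-- Lemma 4.2, case d ≡ 2 (mod 8): the Gram matrix [[-2,0,a],[0,-2,b],[a,b,c]]
(c even) of determinant d can be put by a base change P = [[1,0,s],[0,1,t],[0,0,1]]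
into one of the two normal forms with bottom-right entry (d-2)/4. -/
theorem stmt_14 (a b c : ℤ) (hc : Even c) (d : ℤ) (hd : d = 2*a^2 + 2*b^2 + 4*c)
    (hd8 : d % 8 = 2) :
    ∃ s t : ℤ,
      ((!![1, 0, s; 0, 1, t; 0, 0, 1] : Matrix (Fin 3) (Fin 3) ℤ)ᵀ *
          !![-2, 0, a; 0, -2, b; a, b, c] * !![1, 0, s; 0, 1, t; 0, 0, 1] =
        !![-2, 0, 1; 0, -2, 0; 1, 0, (d - 2) / 4]) ∨
      ((!![1, 0, s; 0, 1, t; 0, 0, 1] : Matrix (Fin 3) (Fin 3) ℤ)ᵀ *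
          !![-2, 0, a; 0, -2, b; a, b, c] * !![1, 0, s; 0, 1, t; 0, 0, 1] =
        !![-2, 0, 0; 0, -2, 1; 0, 1, (d - 2) / 4]) := by
  refine ⟨a / 2, b / 2, ?_⟩
  simp only [shear_transpose_mul_gram_mul_shear]
  set c' := c + 2 * a * (a / 2) + 2 * b * (b / 2) - 2 * (a / 2) ^ 2 - 2 * (b / 2) ^ 2
  have ha : a - 2 * (a / 2) = a % 2 := (Int.emod_def a 2).symm
  have hb : b - 2 * (b / 2) = b % 2 := (Int.emod_def b 2).symm
  have hd' : d = 2 * (a % 2) ^ 2 + 2 * (b % 2) ^ 2 + 4 * c' := by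
    rw [hd, ← ha, ← hb]; ring
  rw [ha, hb]
  rcases Int.emod_two_eq_one_xor_of_emod_eight hc (hd ▸ hd8) with ⟨ha1, hb0⟩ | ⟨ha0, hb1⟩
  · left
    rw [ha1, hb0] at hd' ⊢
    rw [show (d - 2) / 4 = c' by omega]
  · right
    rw [ha0, hb1] at hd' ⊢
    rw [show (d - 2) / 4 = c' by omega]
end

section
/- Let a, n, k be integers with a odd and n even, satisfying a²·(2 + 8k) = 2n² + 2. Let M be the symmetric matrix [[-2, 0, 1], [0, -2, 0], [1, 0, 2k]] and let w = ((a-1)/2, n/2, a) ∈ ℤ³. Then wᵀMw = 0 and e₁ᵀMw = 1, where e₁ = (1, 0, 0). -/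
open Matrix

section EulerPairing

variable {R : Type*} [CommRing R] (k x y z : R)

/- `!![-2, 0, 1; 0, -2, 0; 1, 0, 2 * k]` is the Euler pairing on `⟨λ₁, λ₂, τ⟩` in the normal form
of Lemma 4.2, for discriminant `d = 2 + 8k`. -/

theorem eulerPairing_mulVec :
    !![-2, 0, 1; 0, -2, 0; 1, 0, 2 * k] *ᵥ ![x, y, z] = ![-2 * x + z, -2 * y, x + 2 * k * z] := by
  ext i; fin_cases i <;> simp [mulVec]

theorem eulerPairing_self :
    ![x, y, z] ⬝ᵥ !![-2, 0, 1; 0, -2, 0; 1, 0, 2 * k] *ᵥ ![x, y, z] =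
      2 * (k * z ^ 2 + x * z - x ^ 2 - y ^ 2) := by
  simp only [eulerPairing_mulVec, vec3_dotProduct, cons_val]; ring

theorem eulerPairing_first :
    ![1, 0, 0] ⬝ᵥ !![-2, 0, 1; 0, -2, 0; 1, 0, 2 * k] *ᵥ ![x, y, z] = z - 2 * x := by
  simp only [eulerPairing_mulVec, vec3_dotProduct, cons_val]; ring

end EulerPairing

/-- Key computation in the proof of Theorem 1.4 for d = 2 + 8k ≡ 2 (mod 8):
for M = [[-2,0,1],[0,-2,0],[1,0,2k]] and w = ((a-1)/2, n/2, a), with a odd, n even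
and a²(2+8k) = 2n²+2, one has wᵀMw = 0 and e₁ᵀMw = 1. -/
theorem stmt_17 (a n k : ℤ) (ha : Odd a) (hn : Even n)
    (heq : a^2 * (2 + 8*k) = 2*n^2 + 2) :
    (![(a - 1) / 2, n / 2, a] ⬝ᵥ
        (!![-2, 0, 1; 0, -2, 0; 1, 0, 2*k] : Matrix (Fin 3) (Fin 3) ℤ) *ᵥ
        ![(a - 1) / 2, n / 2, a] = 0) ∧
    (![1, 0, 0] ⬝ᵥ
        (!![-2, 0, 1; 0, -2, 0; 1, 0, 2*k] : Matrix (Fin 3) (Fin 3) ℤ) *ᵥ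
        ![(a - 1) / 2, n / 2, a] = 1) := by
  obtain ⟨b, rfl⟩ := ha
  obtain ⟨m, rfl⟩ := hn
  have hb : (2 * b + 1 - 1) / 2 = b := by omega
  have hm : (m + m) / 2 = m := by omega
  rw [hb, hm, eulerPairing_self, eulerPairing_first]
  refine ⟨?_, by ring⟩
  -- in terms of `b` and `m`, the discriminant equation says exactly that 8 times this bracket vanishes
  have h : 8 * (k * (2 * b + 1) ^ 2 + b * (2 * b + 1) - b ^ 2 - m ^ 2) = 0 := by
    linear_combination heq
  linarith
end

section
/- Let a, n, k be integers with a odd and n odd, satisfying a²·(4 + 8k) = 2n² + 2. Let M be the symmetric matrix [[-2, 0, 1], [0, -2, 1], [1, 1, 2k]] and let w = ((a-1)/2, (a-n)/2, a) ∈ ℤ³. Then wᵀMw = 0 and e₁ᵀMw = 1, where e₁ = (1, 0, 0). -/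
open Matrix

/-!
With `u = (a - 1)/2` and `v = (a - n)/2` one has `a - 2u = 1` and `a - 2v = n`. The pairing of
`e₁` with `w = (u, v, a)` is `a - 2u = 1`, and twice the square of `w` is
`(2 + 4k)a² - (a - 2u)² - (a - 2v)² = (2 + 4k)a² - 1 - n²`, which vanishes by the hypothesis.
-/

/-- The Euler pairing on `⟨λ₁, λ₂, τ⟩` in the normal form of Lemma 4.2 for `d = 4 + 8k`. -/
def eulerPairingMatrix (k : ℤ) : Matrix (Fin 3) (Fin 3) ℤ :=
  !![-2, 0, 1; 0, -2, 1; 1, 1, 2*k]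

lemma eulerPairingMatrix_mulVec (k u v t : ℤ) :
    eulerPairingMatrix k *ᵥ ![u, v, t] = ![t - 2*u, t - 2*v, u + v + 2*k*t] := by
  ext i
  fin_cases i <;> simp [eulerPairingMatrix, mulVec] <;> ring

lemma two_mul_eulerPairing_self (k u v t : ℤ) :
    2 * (![u, v, t] ⬝ᵥ eulerPairingMatrix k *ᵥ ![u, v, t]) =
      (2 + 4*k) * t^2 - (t - 2*u)^2 - (t - 2*v)^2 := by
  rw [eulerPairingMatrix_mulVec, vec3_dotProduct']
  ring

lemma eulerPairing_single_zero (k u v t : ℤ) :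
    ![1, 0, 0] ⬝ᵥ eulerPairingMatrix k *ᵥ ![u, v, t] = t - 2*u := by
  rw [eulerPairingMatrix_mulVec, vec3_dotProduct']
  ring

lemma eulerPairing_self_eq_zero {k u v t n : ℤ} (hu : t - 2*u = 1) (hv : t - 2*v = n)
    (h : t^2 * (4 + 8*k) = 2*n^2 + 2) :
    ![u, v, t] ⬝ᵥ eulerPairingMatrix k *ᵥ ![u, v, t] = 0 := by
  have h2 := two_mul_eulerPairing_self k u v t
  rw [hu, hv] at h2
  linarith

/-- Key computation in the proof of Theorem 1.4 for d = 4 + 8k ≡ 4 (mod 8):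
for M = [[-2,0,1],[0,-2,1],[1,1,2k]] and w = ((a-1)/2, (a-n)/2, a), with a, n odd
and a²(4+8k) = 2n²+2, one has wᵀMw = 0 and e₁ᵀMw = 1. -/
theorem stmt_18 (a n k : ℤ) (ha : Odd a) (hn : Odd n)
    (heq : a^2 * (4 + 8*k) = 2*n^2 + 2) :
    (![(a - 1) / 2, (a - n) / 2, a] ⬝ᵥ
        (!![-2, 0, 1; 0, -2, 1; 1, 1, 2*k] : Matrix (Fin 3) (Fin 3) ℤ) *ᵥ
        ![(a - 1) / 2, (a - n) / 2, a] = 0) ∧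
    (![1, 0, 0] ⬝ᵥ
        (!![-2, 0, 1; 0, -2, 1; 1, 1, 2*k] : Matrix (Fin 3) (Fin 3) ℤ) *ᵥ
        ![(a - 1) / 2, (a - n) / 2, a] = 1) := by
  have hu : a - 2 * ((a - 1) / 2) = 1 := by
    rw [Int.two_mul_ediv_two_of_even (ha.sub_odd odd_one)]
    ring
  have hv : a - 2 * ((a - n) / 2) = n := by
    rw [Int.two_mul_ediv_two_of_even (ha.sub_odd hn)]
    ring
  exact ⟨eulerPairing_self_eq_zero hu hv heq, (eulerPairing_single_zero k _ _ a).trans hu⟩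
end
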